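/- arXiv:1104.5390 — 6 statements merged into one kernel-verified Lean document; each statement's English description precedes it below -/
import Mathlib

section
/- Let E be a sublinear expectation. For any convex function φ: ℝ → ℝ and any X such that X and φ(X) are in the domain of E, we have E(φ(X)) ≥ φ(E(X)). (Jensen's inequality for sublinear expectations, with the inequality reversed compared to the classical case.) -/
/-- A convex function on ℝ has a supporting line at every point. -/
lemma convex_support_line (φ : ℝ → ℝ) (hφ : ConvexOn ℝ Set.univ φ) (m : ℝ) :
    ∃ a : ℝ, ∀ y : ℝ, φ m + a * (y - m) ≤ φ y := by
  set S : Set ℝ := {z : ℝ | ∃ y : ℝ, m < y ∧ z = (φ y - φ m) / (y - m)} with hS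
  have hne : S.Nonempty := ⟨(φ (m + 1) - φ m) / (m + 1 - m), m + 1, by linarith, rfl⟩
  have hlb : ∀ x < m, ∀ z ∈ S, (φ x - φ m) / (x - m) ≤ z := by
    rintro x hx z ⟨y, hy, rfl⟩
    exact hφ.secant_mono trivial trivial trivial (by linarith) (by linarith) (by linarith)
  have hbdd : BddBelow S := ⟨(φ (m - 1) - φ m) / (m - 1 - m), fun z hz =>
    hlb (m - 1) (by linarith) z hz⟩
  refine ⟨sInf S, fun y => ?_⟩
  rcases lt_trichotomy y m with h | h | h
  · have : (φ y - φ m) / (y - m) ≤ sInf S := le_csInf hne (hlb y h)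
    rw [div_le_iff_of_neg (by linarith)] at this
    linarith
  · simp [h]
  · have : sInf S ≤ (φ y - φ m) / (y - m) := csInf_le hbdd ⟨y, h, rfl⟩
    rw [le_div_iff₀ (by linarith)] at this
    linarith

/-- Jensen's inequality for sublinear expectations: for convex
`φ : ℝ → ℝ`, `E(φ ∘ X) ≥ φ(E X)`. -/
theorem sublinear_jensen
    {Ω : Type*} (E : (Ω → ℝ) → ℝ)
    (hmono : ∀ X Y : Ω → ℝ, (∀ ω, X ω ≤ Y ω) → E X ≤ E Y)
    (htrans : ∀ (X : Ω → ℝ) (c : ℝ), E (X + fun _ => c) = E X + c)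
    (hsub : ∀ X Y : Ω → ℝ, E (X + Y) ≤ E X + E Y)
    (hhom : ∀ (a : ℝ) (X : Ω → ℝ),
      E (a • X) = max a 0 * E X + max (-a) 0 * E (-X))
    (φ : ℝ → ℝ) (hφ : ConvexOn ℝ Set.univ φ) (X : Ω → ℝ) :
    φ (E X) ≤ E (fun ω => φ (X ω)) := by
  set m := E X with hm
  obtain ⟨a, ha⟩ := convex_support_line φ hφ m
  have hE0 : E 0 = 0 := by
    have := hhom 0 X
    simpa using this
  have hEneg : -E X ≤ E (-X) := by
    have h := hsub X (-X)
    simp only [add_neg_cancel, hE0] at h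
    linarith
  have key : E (a • X + fun _ => φ m - a * m) ≤ E (fun ω => φ (X ω)) := by
    apply hmono
    intro ω
    have := ha (X ω)
    simp only [Pi.add_apply, Pi.smul_apply, smul_eq_mul]
    linarith
  rw [htrans, hhom] at key
  rcases le_or_gt a 0 with hle | hlt
  · have h1 : max a 0 = 0 := max_eq_right hle
    have h2 : max (-a) 0 = -a := max_eq_left (by linarith)
    rw [h1, h2] at key
    nlinarith [hEneg]
  · have h1 : max a 0 = a := max_eq_left hlt.le
    have h2 : max (-a) 0 = 0 := max_eq_right (by linarith)
    rw [h1, h2] at key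
    linarith
end

section
/- Under a sublinear expectation E with monotone continuity, a sequence X_n converging quasi-surely to X also converges in capacity: for all ε, δ > 0 there is N such that E(1_{|X_m - X| > ε}) < δ for all m ≥ N. Conversely, any sequence converging in capacity has a subsequence converging quasi-surely. -/
open MeasureTheory Filter

variable {Ω : Type*} [MeasurableSpace Ω]

/-- The capacity `c(A) = sup_{θ∈Θ} θ(A)` associated with the sublinear
expectation `E(X) = sup_{θ∈Θ} E_θ[X]` (so `c(A) = E(1_A)`). -/
noncomputable def capa (Θ : Set (Measure Ω)) (A : Set Ω) : ℝ :=
  ⨆ θ : Θ, ((θ : Measure Ω) A).toReal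

/-!
Quasi-sure convergence gives convergence in capacity by monotone continuity of the capacity,
applied to the tails `⋃ k ≥ n, {ε < |X k - X|}` with the exceptional polar set removed.
Conversely, choose `φ k` so that `{2⁻ᵏ < |X (φ k) - X|}` has capacity below `2⁻ᵏ`; these
capacities are summable, so by Borel–Cantelli under every `θ ∈ Θ` the set of points lying in
infinitely many of these sets is polar, and off it `X (φ k) → X`.
-/

namespace Capacity

variable {Θ : Set (Measure Ω)}

def IsPolar (Θ : Set (Measure Ω)) (N : Set Ω) : Prop :=
  ∀ θ ∈ Θ, θ N = 0

def CapaContinuousFromAbove (Θ : Set (Measure Ω)) : Prop :=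
  ∀ A : ℕ → Set Ω, (∀ n, A (n + 1) ⊆ A n) → (⋂ n, A n) = ∅ →
    Tendsto (fun n => capa Θ (A n)) atTop (nhds 0)

def TendstoQuasiSurely (Θ : Set (Measure Ω)) (X : ℕ → Ω → ℝ) (Xlim : Ω → ℝ) :
    Prop :=
  ∃ N : Set Ω, IsPolar Θ N ∧
    ∀ ω ∉ N, Tendsto (fun n => X n ω) atTop (nhds (Xlim ω))

def TendstoInCapa (Θ : Set (Measure Ω)) (X : ℕ → Ω → ℝ) (Xlim : Ω → ℝ) : Prop :=
  ∀ ε > (0 : ℝ), ∀ δ > (0 : ℝ), ∃ N₀ : ℕ, ∀ m ≥ N₀,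
    capa Θ {ω | ε < |X m ω - Xlim ω|} < δ

lemma capa_nonneg (A : Set Ω) : 0 ≤ capa Θ A :=
  Real.iSup_nonneg fun _ => ENNReal.toReal_nonneg

variable (hprob : ∀ θ ∈ Θ, IsProbabilityMeasure θ)
include hprob

lemma measure_toReal_le_capa {θ : Measure Ω} (hθ : θ ∈ Θ) (A : Set Ω) :
    (θ A).toReal ≤ capa Θ A := by
  refine le_ciSup (f := fun θ : Θ => ((θ : Measure Ω) A).toReal) ⟨1, ?_⟩ ⟨θ, hθ⟩
  rintro _ ⟨θ', rfl⟩
  have := hprob θ' θ'.2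
  exact ENNReal.toReal_le_of_le_ofReal zero_le_one (by simpa using prob_le_one)

lemma measure_le_ofReal_capa {θ : Measure Ω} (hθ : θ ∈ Θ) (A : Set Ω) :
    θ A ≤ ENNReal.ofReal (capa Θ A) := by
  have := hprob θ hθ
  exact (ENNReal.le_ofReal_iff_toReal_le (measure_ne_top θ A) (capa_nonneg A)).2
    (measure_toReal_le_capa hprob hθ A)

lemma capa_le_of_subset_union_isPolar {A B N : Set Ω} (hN : IsPolar Θ N) (hAB : A ⊆ B ∪ N) :
    capa Θ A ≤ capa Θ B := by
  refine Real.iSup_le (fun ⟨θ, hθ⟩ => ?_) (capa_nonneg B)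
  have := hprob θ hθ
  have hle : θ A ≤ θ B :=
    calc θ A ≤ θ (B ∪ N) := measure_mono hAB
      _ ≤ θ B + θ N := measure_union_le B N
      _ = θ B := by rw [hN θ hθ, add_zero]
  exact (ENNReal.toReal_mono (measure_ne_top θ B) hle).trans (measure_toReal_le_capa hprob hθ B)

lemma isPolar_limsup_of_summable_capa {A : ℕ → Set Ω} (hA : Summable fun k => capa Θ (A k)) :
    IsPolar Θ (limsup A atTop) := by
  intro θ hθ
  refine measure_limsup_atTop_eq_zero <|
    ne_top_of_le_ne_top (ENNReal.ofReal_ne_top (r := ∑' k, capa Θ (A k))) ?_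
  rw [ENNReal.ofReal_tsum_of_nonneg (fun k => capa_nonneg (A k)) hA]
  exact ENNReal.tsum_le_tsum fun k => measure_le_ofReal_capa hprob hθ (A k)

theorem TendstoQuasiSurely.tendstoInCapa (hmc : CapaContinuousFromAbove Θ) {X : ℕ → Ω → ℝ}
    {Xlim : Ω → ℝ} (hX : TendstoQuasiSurely Θ X Xlim) : TendstoInCapa Θ X Xlim := by
  obtain ⟨N, hN, hconv⟩ := hX
  intro ε hε δ hδ
  set A : ℕ → Set Ω := fun n => (⋃ k ≥ n, {ω | ε < |X k ω - Xlim ω|}) \ N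
  have hanti : ∀ n, A (n + 1) ⊆ A n := fun n =>
    Set.sdiff_subset_sdiff_left <|
      Set.biUnion_mono (fun _ hk => Nat.le_of_succ_le hk) fun _ _ => le_rfl
  have hempty : (⋂ n, A n) = ∅ := by
    refine Set.eq_empty_of_forall_notMem fun ω hω => ?_
    have hωN : ω ∉ N := (Set.mem_iInter.1 hω 0).2
    obtain ⟨n, hn⟩ := Metric.tendsto_atTop.1 (hconv ω hωN) ε hε
    obtain ⟨k, hk, hfar⟩ := Set.mem_iUnion₂.1 (Set.mem_iInter.1 hω n).1
    exact (hn k hk).not_gt (by rwa [Real.dist_eq])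
  obtain ⟨N₀, hN₀⟩ :=
    ((hmc A hanti hempty).eventually (gt_mem_nhds hδ)).exists_forall_of_atTop
  refine ⟨N₀, fun m hm => ?_⟩
  have hsub : {ω | ε < |X m ω - Xlim ω|} ⊆ A N₀ ∪ N := fun ω hω =>
    or_iff_not_imp_right.2 fun hωN => ⟨Set.mem_biUnion hm hω, hωN⟩
  exact (capa_le_of_subset_union_isPolar hprob hN hsub).trans_lt (hN₀ N₀ le_rfl)

theorem TendstoInCapa.exists_subseq_tendstoQuasiSurely {X : ℕ → Ω → ℝ} {Xlim : Ω → ℝ}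
    (hX : TendstoInCapa Θ X Xlim) :
    ∃ φ : ℕ → ℕ, StrictMono φ ∧ TendstoQuasiSurely Θ (fun k => X (φ k)) Xlim := by
  obtain ⟨φ, hφ, hcapa⟩ := extraction_forall_of_eventually' fun k =>
    hX ((1 / 2 : ℝ) ^ k) (by positivity) ((1 / 2 : ℝ) ^ k) (by positivity)
  set A : ℕ → Set Ω := fun k => {ω | (1 / 2 : ℝ) ^ k < |X (φ k) ω - Xlim ω|}
  have hsum : Summable fun k => capa Θ (A k) :=
    summable_geometric_two.of_nonneg_of_le (fun k => capa_nonneg (A k)) fun k => (hcapa k).le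
  refine ⟨φ, hφ, limsup A atTop, isPolar_limsup_of_summable_capa hprob hsum, fun ω hω => ?_⟩
  have hclose : ∀ᶠ k in atTop, |X (φ k) ω - Xlim ω| ≤ (1 / 2 : ℝ) ^ k := by
    simpa [A, mem_limsup_iff_frequently_mem, not_frequently] using hω
  have hgeom : Tendsto (fun k => (1 / 2 : ℝ) ^ k) atTop (nhds 0) :=
    tendsto_pow_atTop_nhds_zero_of_lt_one (by norm_num) (by norm_num)
  exact tendsto_iff_dist_tendsto_zero.2 <|
    squeeze_zero' (Eventually.of_forall fun k => dist_nonneg) (by simpa only [Real.dist_eq]) hgeom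

end Capacity

open Capacity in
theorem qs_convergence_and_capacity_general
    (Θ : Set (Measure Ω))
    (hprob : ∀ θ ∈ Θ, IsProbabilityMeasure θ)
    (hmc : ∀ A : ℕ → Set Ω, (∀ n, A (n + 1) ⊆ A n) → (⋂ n, A n) = ∅ →
      Tendsto (fun n => capa Θ (A n)) atTop (nhds 0))
    (X : ℕ → Ω → ℝ) (Xlim : Ω → ℝ) :
    ((∃ N : Set Ω, (∀ θ ∈ Θ, θ N = 0) ∧
        ∀ ω ∉ N, Tendsto (fun n => X n ω) atTop (nhds (Xlim ω))) →
      ∀ ε > (0 : ℝ), ∀ δ > (0 : ℝ), ∃ N₀ : ℕ, ∀ m ≥ N₀,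
        capa Θ {ω | ε < |X m ω - Xlim ω|} < δ) ∧
    ((∀ ε > (0 : ℝ), ∀ δ > (0 : ℝ), ∃ N₀ : ℕ, ∀ m ≥ N₀,
        capa Θ {ω | ε < |X m ω - Xlim ω|} < δ) →
      ∃ φ : ℕ → ℕ, StrictMono φ ∧
        ∃ N : Set Ω, (∀ θ ∈ Θ, θ N = 0) ∧
          ∀ ω ∉ N, Tendsto (fun k => X (φ k) ω) atTop (nhds (Xlim ω))) :=
  ⟨fun hqs => TendstoQuasiSurely.tendstoInCapa hprob hmc hqs,
    fun hcap => TendstoInCapa.exists_subseq_tendstoQuasiSurely hprob hcap⟩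

/-- Under a sublinear expectation with monotone continuity,
quasi-sure convergence implies convergence in capacity; conversely,
convergence in capacity yields a quasi-surely convergent subsequence. -/
theorem qs_convergence_and_capacity
    (Θ : Set (Measure Ω)) (hΘ : Θ.Nonempty)
    (hprob : ∀ θ ∈ Θ, IsProbabilityMeasure θ)
    (hmc : ∀ A : ℕ → Set Ω, (∀ n, A (n + 1) ⊆ A n) → (⋂ n, A n) = ∅ →
      Tendsto (fun n => capa Θ (A n)) atTop (nhds 0))
    (X : ℕ → Ω → ℝ) (Xlim : Ω → ℝ) :
    ((∃ N : Set Ω, (∀ θ ∈ Θ, θ N = 0) ∧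
        ∀ ω ∉ N, Tendsto (fun n => X n ω) atTop (nhds (Xlim ω))) →
      ∀ ε > (0 : ℝ), ∀ δ > (0 : ℝ), ∃ N₀ : ℕ, ∀ m ≥ N₀,
        capa Θ {ω | ε < |X m ω - Xlim ω|} < δ) ∧
    ((∀ ε > (0 : ℝ), ∀ δ > (0 : ℝ), ∃ N₀ : ℕ, ∀ m ≥ N₀,
        capa Θ {ω | ε < |X m ω - Xlim ω|} < δ) →
      ∃ φ : ℕ → ℕ, StrictMono φ ∧
        ∃ N : Set Ω, (∀ θ ∈ Θ, θ N = 0) ∧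
          ∀ ω ∉ N, Tendsto (fun k => X (φ k) ω) atTop (nhds (Xlim ω))) :=
  qs_convergence_and_capacity_general Θ hprob hmc X Xlim
end

section
/- Let (E_t) be a discrete-time filtration-consistent sublinear expectation, X an SL-submartingale, and S ≤ T bounded stopping times. Then X_S ≤ E_S(X_T) quasi-surely, where E_S(·)(ω) := E_{S(ω)}(·)(ω). Similarly for an SL-supermartingale X_S ≥ E_S(X_T), and for an SL-martingale X_S = E_S(X_T). -/
open MeasureTheory

/-- A filtration-consistent sublinear expectation in discrete time:
a family `E t : H → H_t` which is monotone, recursive (tower property),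
`F t`-regular, projective on `F t`-measurable functions, subadditive and
positively homogeneous. -/
structure SLFamily (Ω : Type*) (F : ℕ → MeasurableSpace Ω) where
  E : ℕ → (Ω → ℝ) → (Ω → ℝ)
  measurable_E : ∀ t f, Measurable[F t] (E t f)
  mono : ∀ t (f g : Ω → ℝ), (∀ ω, f ω ≤ g ω) → ∀ ω, E t f ω ≤ E t g ω
  tower : ∀ s t, s ≤ t → ∀ f, E s (E t f) = E s f
  regular : ∀ t (A : Set Ω), MeasurableSet[F t] A →
    ∀ f, E t (A.indicator f) = A.indicator (E t f)
  proj : ∀ t (f : Ω → ℝ), Measurable[F t] f → E t f = f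
  subadd : ∀ t (f g : Ω → ℝ) (ω : Ω), E t (f + g) ω ≤ E t f ω + E t g ω
  poshom : ∀ t (l : Ω → ℝ), Measurable[F t] l → ∀ (f : Ω → ℝ) (ω : Ω),
    E t (fun ω' => l ω' * f ω') ω =
      max (l ω) 0 * E t f ω + max (-l ω) 0 * E t (-f) ω


/-- `S` is a stopping time for the filtration `F`. -/
def IsSLStoppingTime {Ω : Type*} (F : ℕ → MeasurableSpace Ω) (S : Ω → ℕ) : Prop :=
  ∀ n, MeasurableSet[F n] {ω | S ω ≤ n}

/-- `N` is polar: `E(1_N) = 0`. -/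
def IsPolar {Ω : Type*} {F : ℕ → MeasurableSpace Ω} (SL : SLFamily Ω F)
    (N : Set Ω) : Prop :=
  SL.E 0 (N.indicator 1) = 0

section Aux
variable {Ω : Type*} {F : ℕ → MeasurableSpace Ω}

lemma E_zero' (SL : SLFamily Ω F) (t : ℕ) (ω : Ω) : SL.E t (fun _ => (0:ℝ)) ω = 0 := by
  have h := SL.poshom t (fun _ => (0:ℝ)) measurable_const (fun _ => (0:ℝ)) ω
  simpa using h

lemma E_nonneg (SL : SLFamily Ω F) (t : ℕ) {g : Ω → ℝ} (hg : ∀ ω, 0 ≤ g ω) (ω : Ω) :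
    0 ≤ SL.E t g ω := by
  have h := SL.mono t (fun _ => 0) g hg ω
  rwa [E_zero'] at h

lemma E_smul (SL : SLFamily Ω F) (t : ℕ) {c : ℝ} (hc : 0 ≤ c) (g : Ω → ℝ) (ω : Ω) :
    SL.E t (fun ω' => c * g ω') ω = c * SL.E t g ω := by
  have h := SL.poshom t (fun _ => c) measurable_const g ω
  simpa [max_eq_left hc, max_eq_right (neg_nonpos.mpr hc)] using h

lemma E_le_add (SL : SLFamily Ω F) (t : ℕ) (f g : Ω → ℝ) (ω : Ω) :
    SL.E t f ω ≤ SL.E t (fun ω' => f ω' - g ω') ω + SL.E t g ω := by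
  have h := SL.subadd t (fun ω' => f ω' - g ω') g ω
  have e : (fun ω' => f ω' - g ω') + g = f := by
    funext ω'; show f ω' - g ω' + g ω' = f ω'; ring
  rwa [e] at h

lemma locality (SL : SLFamily Ω F) {n : ℕ} {A : Set Ω} (hA : MeasurableSet[F n] A)
    {f g : Ω → ℝ} (hfg : A.indicator f = A.indicator g) {ω : Ω} (hω : ω ∈ A) :
    SL.E n f ω = SL.E n g ω := by
  calc SL.E n f ω = A.indicator (SL.E n f) ω := (Set.indicator_of_mem hω _).symm
    _ = SL.E n (A.indicator f) ω := by rw [SL.regular n A hA f]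
    _ = SL.E n (A.indicator g) ω := by rw [hfg]
    _ = A.indicator (SL.E n g) ω := by rw [SL.regular n A hA g]
    _ = SL.E n g ω := Set.indicator_of_mem hω _

end Aux
section Aux2
variable {Ω : Type*} {F : ℕ → MeasurableSpace Ω}

/-- Key lemma: a nonnegative function with zero sublinear expectation has polar support.
Uses `1_{ψ>0} ≤ (j+1)·ψ + (1/(j+1))·G` with `G = ψ⁻¹` on the support. -/
lemma polar_of_null (SL : SLFamily Ω F) {ψ : Ω → ℝ} (hψ0 : ∀ ω, 0 ≤ ψ ω)
    (hψ : ∀ ω, SL.E 0 ψ ω = 0) : IsPolar SL {ω | ψ ω ≠ 0} := by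
  classical
  set N : Set Ω := {ω | ψ ω ≠ 0} with hN
  set G : Ω → ℝ := fun ω => if ψ ω = 0 then 0 else (ψ ω)⁻¹ with hG
  funext ω
  show SL.E 0 (N.indicator 1) ω = 0
  have hub : ∀ j : ℕ, SL.E 0 (N.indicator 1) ω ≤ (1/((j:ℝ)+1)) * SL.E 0 G ω := by
    intro j
    have hj1 : (0:ℝ) < (j:ℝ) + 1 := by positivity
    have hle : ∀ ω', N.indicator (1 : Ω → ℝ) ω' ≤ ((j:ℝ)+1) * ψ ω' + (1/((j:ℝ)+1)) * G ω' := by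
      intro ω'
      by_cases h0 : ψ ω' = 0
      · have hnm : ω' ∉ N := by simp [hN, h0]
        have hg0 : G ω' = 0 := by simp [hG, h0]
        rw [Set.indicator_of_notMem hnm, h0, hg0]
        norm_num
      · have hp : 0 < ψ ω' := lt_of_le_of_ne (hψ0 ω') (Ne.symm h0)
        have hmem : ω' ∈ N := h0
        rw [Set.indicator_of_mem hmem, Pi.one_apply]
        have hg : G ω' = (ψ ω')⁻¹ := by simp [hG, h0]
        rw [hg]
        rcases le_or_gt 1 (((j:ℝ)+1) * ψ ω') with h1 | h1
        · have h2 : 0 ≤ (1/((j:ℝ)+1)) * (ψ ω')⁻¹ := by positivity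
          linarith
        · have h2 : ((j:ℝ)+1) < (ψ ω')⁻¹ := by
            rw [← one_div]
            rw [lt_div_iff₀ hp]
            linarith
          have h3 : 1 < (1/((j:ℝ)+1)) * (ψ ω')⁻¹ := by
            rw [div_mul_eq_mul_div, one_mul, lt_div_iff₀ hj1, one_mul]
            linarith
          have h4 : 0 ≤ ((j:ℝ)+1) * ψ ω' := by positivity
          linarith
    calc SL.E 0 (N.indicator 1) ω
        ≤ SL.E 0 (fun ω' => ((j:ℝ)+1) * ψ ω' + (1/((j:ℝ)+1)) * G ω') ω :=
          SL.mono 0 _ _ hle ω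
      _ ≤ SL.E 0 (fun ω' => ((j:ℝ)+1) * ψ ω') ω + SL.E 0 (fun ω' => (1/((j:ℝ)+1)) * G ω') ω :=
          SL.subadd 0 _ _ ω
      _ = ((j:ℝ)+1) * SL.E 0 ψ ω + (1/((j:ℝ)+1)) * SL.E 0 G ω := by
          rw [E_smul SL 0 (by positivity) ψ ω, E_smul SL 0 (by positivity) G ω]
      _ = (1/((j:ℝ)+1)) * SL.E 0 G ω := by rw [hψ ω]; ring
  have hlb : 0 ≤ SL.E 0 (N.indicator 1) ω :=
    E_nonneg SL 0 (fun ω' => Set.indicator_nonneg (fun _ _ => zero_le_one) ω') ω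
  have hub0 : SL.E 0 (N.indicator 1) ω ≤ 0 := by
    by_contra hcon
    push_neg at hcon
    set c := SL.E 0 (N.indicator 1) ω
    set M := SL.E 0 G ω
    rcases le_or_gt M 0 with hM | hM
    · have h0 := hub 0
      have : (1/((0:ℕ):ℝ)+1) * M ≤ 0 := by norm_num; nlinarith
      have h1 : (1/(((0:ℕ):ℝ)+1)) * M ≤ 0 := by norm_num; linarith
      linarith [hub 0, h1]
    · obtain ⟨j, hj⟩ := exists_nat_gt (M / c)
      have hj1 : (0:ℝ) < (j:ℝ) + 1 := by positivity
      have h2 : M < c * ((j:ℝ)+1) := by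
        have := (div_lt_iff₀ hcon).mp hj
        nlinarith
      have h3 : (1/((j:ℝ)+1)) * M < c := by
        rw [div_mul_eq_mul_div, one_mul, div_lt_iff₀ hj1]
        linarith
      linarith [hub j]
  linarith

lemma polar_union (SL : SLFamily Ω F) {N₁ N₂ : Set Ω} (h1 : IsPolar SL N₁)
    (h2 : IsPolar SL N₂) : IsPolar SL (N₁ ∪ N₂) := by
  classical
  funext ω
  show SL.E 0 ((N₁ ∪ N₂).indicator 1) ω = 0
  have hle : ∀ ω', (N₁ ∪ N₂).indicator (1 : Ω → ℝ) ω' ≤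
      (N₁.indicator (1:Ω→ℝ) + N₂.indicator (1:Ω→ℝ)) ω' := by
    intro ω'
    simp only [Set.indicator_apply, Pi.add_apply, Pi.one_apply, Set.mem_union]
    split_ifs with hu ha hb hb <;> simp_all <;> norm_num
  have hub : SL.E 0 ((N₁ ∪ N₂).indicator 1) ω ≤ 0 := by
    calc SL.E 0 ((N₁ ∪ N₂).indicator 1) ω
        ≤ SL.E 0 (N₁.indicator (1:Ω→ℝ) + N₂.indicator (1:Ω→ℝ)) ω := SL.mono 0 _ _ hle ω
      _ ≤ SL.E 0 (N₁.indicator 1) ω + SL.E 0 (N₂.indicator 1) ω := SL.subadd 0 _ _ ω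
      _ = 0 := by rw [congrFun h1 ω, congrFun h2 ω]; norm_num
  have hlb : 0 ≤ SL.E 0 ((N₁ ∪ N₂).indicator 1) ω :=
    E_nonneg SL 0 (fun ω' => Set.indicator_nonneg (fun _ _ => zero_le_one) ω') ω
  linarith

lemma E_sum_le (SL : SLFamily Ω F) (t : ℕ) (g : ℕ → Ω → ℝ) :
    ∀ m, ∀ ω, SL.E t (fun ω' => ∑ j ∈ Finset.range m, g j ω') ω ≤
      ∑ j ∈ Finset.range m, SL.E t (g j) ω := by
  intro m
  induction m with
  | zero =>
    intro ω
    simp only [Finset.range_zero, Finset.sum_empty]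
    rw [E_zero']
  | succ m ihm =>
    intro ω
    have he : (fun ω' => ∑ j ∈ Finset.range (m+1), g j ω') =
        (fun ω' => ∑ j ∈ Finset.range m, g j ω') + g m := by
      funext ω'; simp [Finset.sum_range_succ]
    rw [he, Finset.sum_range_succ]
    exact le_trans (SL.subadd t _ _ ω) (by linarith [ihm ω])

end Aux2
section ErrDef
variable {Ω : Type*} {F : ℕ → MeasurableSpace Ω}

/-- `hsum X n = ∑_{k ≤ n} |X k|`, a bound for stopped values. -/
noncomputable def hsum (X : ℕ → Ω → ℝ) (n : ℕ) : Ω → ℝ :=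
  fun ω => ∑ k ∈ Finset.range (n+1), |X k ω|

/-- Defect caused by `{T < n}` not being `F n`-measurable. -/
noncomputable def dlt (SL : SLFamily Ω F) (X : ℕ → Ω → ℝ) (T : Ω → ℕ) (n : ℕ) : Ω → ℝ :=
  ({ω' | T ω' < n}ᶜ).indicator
    (SL.E n (Set.indicator {ω' | T ω' < n} (hsum X n)))

/-- Accumulated error in the backward induction; `err j` is the error at time `K + 1 - j`. -/
noncomputable def err (SL : SLFamily Ω F) (X : ℕ → Ω → ℝ) (T : Ω → ℕ) (K : ℕ) :
    ℕ → Ω → ℝ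
  | 0 => fun _ => 0
  | (j+1) => fun ω => SL.E (K - j) (err SL X T K j) ω + 2 * dlt SL X T (K - j) ω

lemma hsum_nonneg (X : ℕ → Ω → ℝ) (n : ℕ) (ω : Ω) : 0 ≤ hsum X n ω :=
  Finset.sum_nonneg fun _ _ => abs_nonneg _

lemma abs_le_hsum (X : ℕ → Ω → ℝ) {k n : ℕ} (hk : k ≤ n) (ω : Ω) :
    |X k ω| ≤ hsum X n ω :=
  Finset.single_le_sum (f := fun i => |X i ω|) (fun _ _ => abs_nonneg _)
    (Finset.mem_range.mpr (by omega))

lemma dlt_nonneg (SL : SLFamily Ω F) (X : ℕ → Ω → ℝ) (T : Ω → ℕ) (n : ℕ) (ω : Ω) :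
    0 ≤ dlt SL X T n ω := by
  unfold dlt
  apply Set.indicator_nonneg
  intro ω' _
  exact E_nonneg SL n (fun ω'' =>
    Set.indicator_nonneg (fun ω''' _ => hsum_nonneg X n ω''') ω'') ω'

lemma meas_B (T : Ω → ℕ) (hT : IsSLStoppingTime F T) (n : ℕ) :
    MeasurableSet[F (n-1)] {ω' | T ω' < n} := by
  cases n with
  | zero =>
    have : {ω' : Ω | T ω' < 0} = ∅ := by ext ω'; simp
    rw [this]; exact @MeasurableSet.empty _ (F _)
  | succ m =>
    have : {ω' : Ω | T ω' < m + 1} = {ω' | T ω' ≤ m} := by ext ω'; simp [Nat.lt_succ_iff]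
    rw [this]; simpa using hT m

lemma dlt_null (SL : SLFamily Ω F) (X : ℕ → Ω → ℝ) (T : Ω → ℕ)
    (hT : IsSLStoppingTime F T) (n : ℕ) (ω : Ω) : SL.E 0 (dlt SL X T n) ω = 0 := by
  set B : Set Ω := {ω' | T ω' < n} with hB
  have hBm : MeasurableSet[F (n-1)] B := meas_B T hT n
  have step1 : SL.E (n-1) (dlt SL X T n) = fun _ => (0:ℝ) := by
    have r1 : SL.E (n-1) (dlt SL X T n) =
        (Bᶜ).indicator (SL.E (n-1) (SL.E n (B.indicator (hsum X n)))) :=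
      SL.regular (n-1) Bᶜ hBm.compl _
    have r2 : SL.E (n-1) (SL.E n (B.indicator (hsum X n))) =
        SL.E (n-1) (B.indicator (hsum X n)) :=
      SL.tower (n-1) n (Nat.sub_le n 1) _
    have r3 : SL.E (n-1) (B.indicator (hsum X n)) =
        B.indicator (SL.E (n-1) (hsum X n)) :=
      SL.regular (n-1) B hBm _
    rw [r1, r2, r3]
    funext ω'
    by_cases hb : ω' ∈ B
    · exact Set.indicator_of_notMem (by simpa using hb) _
    · rw [Set.indicator_of_mem (by simpa using hb) _, Set.indicator_of_notMem hb]
  have t0 : SL.E 0 (SL.E (n-1) (dlt SL X T n)) = SL.E 0 (dlt SL X T n) :=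
    SL.tower 0 (n-1) (Nat.zero_le _) _
  rw [← t0, step1, E_zero']

lemma err_nonneg (SL : SLFamily Ω F) (X : ℕ → Ω → ℝ) (T : Ω → ℕ) (K : ℕ) :
    ∀ j ω, 0 ≤ err SL X T K j ω := by
  intro j
  induction j with
  | zero => intro ω; simp [err]
  | succ j ih =>
    intro ω
    show 0 ≤ SL.E (K - j) (err SL X T K j) ω + 2 * dlt SL X T (K - j) ω
    have h1 := E_nonneg SL (K - j) ih ω
    have h2 := dlt_nonneg SL X T (K - j) ω
    linarith

lemma err_null (SL : SLFamily Ω F) (X : ℕ → Ω → ℝ) (T : Ω → ℕ)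
    (hT : IsSLStoppingTime F T) (K : ℕ) :
    ∀ j ω, SL.E 0 (err SL X T K j) ω = 0 := by
  intro j
  induction j with
  | zero =>
    intro ω
    show SL.E 0 (fun _ => (0:ℝ)) ω = 0
    exact E_zero' SL 0 ω
  | succ j ih =>
    intro ω
    have hlb : 0 ≤ SL.E 0 (err SL X T K (j+1)) ω :=
      E_nonneg SL 0 (err_nonneg SL X T K (j+1)) ω
    have hsplit : err SL X T K (j+1) =
        (SL.E (K - j) (err SL X T K j)) + (fun ω' => 2 * dlt SL X T (K - j) ω') := rfl
    have hub : SL.E 0 (err SL X T K (j+1)) ω ≤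
        SL.E 0 (SL.E (K - j) (err SL X T K j)) ω +
        SL.E 0 (fun ω' => 2 * dlt SL X T (K - j) ω') ω := by
      rw [hsplit]; exact SL.subadd 0 _ _ ω
    have e1 : SL.E 0 (SL.E (K - j) (err SL X T K j)) ω = 0 := by
      rw [SL.tower 0 (K - j) (Nat.zero_le _) _]; exact ih ω
    have e2 : SL.E 0 (fun ω' => 2 * dlt SL X T (K - j) ω') ω = 0 := by
      rw [E_smul SL 0 (by norm_num) _ ω, dlt_null SL X T hT (K - j) ω]; ring
    rw [e1, e2] at hub
    linarith

end ErrDef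
section Main
variable {Ω : Type*} {F : ℕ → MeasurableSpace Ω}

lemma main_sub (SL : SLFamily Ω F) (X : ℕ → Ω → ℝ) (hadapted : ∀ t, Measurable[F t] (X t))
    (T : Ω → ℕ) (hT : IsSLStoppingTime F T) (K : ℕ) (hbdd : ∀ ω, T ω ≤ K)
    (hsub : ∀ s t, s ≤ t → ∀ ω, X s ω ≤ SL.E s (X t) ω) :
    ∀ j n, j + n = K + 1 → ∀ ω, n ≤ T ω →
      X n ω ≤ SL.E n (fun ω' => X (T ω') ω') ω + err SL X T K j ω := by
  intro j
  induction j with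
  | zero =>
    intro n hn ω hω
    exfalso; have := hbdd ω; omega
  | succ j ih =>
    intro n hn ω hω
    have hKj : K - j = n := by omega
    have herr : err SL X T K (j+1) ω = SL.E n (err SL X T K j) ω + 2 * dlt SL X T n ω := by
      show SL.E (K - j) (err SL X T K j) ω + 2 * dlt SL X T (K - j) ω = _
      rw [hKj]
    have herrnn : 0 ≤ SL.E n (err SL X T K j) ω :=
      E_nonneg SL n (err_nonneg SL X T K j) ω
    have hdltnn : 0 ≤ dlt SL X T n ω := dlt_nonneg SL X T n ω
    by_cases hc : T ω ≤ n
    · -- "gap" case : T ω = n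
      have hBc : ¬ T ω < n := by omega
      -- locality : E n f = E n g at ω, where g is the stopped function
      have hfg : SL.E n (fun ω' => X (T ω') ω') ω =
          SL.E n (fun ω' => X (min (T ω') n) ω') ω := by
        apply locality SL (hT n) _ (show ω ∈ {ω' | T ω' ≤ n} from hc)
        funext ω'
        by_cases hm : ω' ∈ {ω'' | T ω'' ≤ n}
        · rw [Set.indicator_of_mem hm, Set.indicator_of_mem hm]
          have : min (T ω') n = T ω' := min_eq_left hm
          rw [this]
        · rw [Set.indicator_of_notMem hm, Set.indicator_of_notMem hm]
      have c1 : X n ω = SL.E n (X n) ω := (congrFun (SL.proj n (X n) (hadapted n)) ω).symm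
      have c2 : SL.E n (X n) ω ≤
          SL.E n (fun ω' => X n ω' - ({ω'' | T ω'' < n}).indicator (X n) ω') ω +
          SL.E n (({ω'' | T ω'' < n}).indicator (X n)) ω :=
        E_le_add SL n (X n) _ ω
      have c3 : SL.E n (({ω'' | T ω'' < n}).indicator (X n)) ω ≤
          SL.E n (({ω'' | T ω'' < n}).indicator (hsum X n)) ω := by
        apply SL.mono
        intro ω'
        by_cases hb : ω' ∈ {ω'' | T ω'' < n}
        · rw [Set.indicator_of_mem hb, Set.indicator_of_mem hb]
          exact le_trans (le_abs_self _) (abs_le_hsum X le_rfl ω')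
        · rw [Set.indicator_of_notMem hb, Set.indicator_of_notMem hb]
      have c4 : SL.E n (fun ω' => X n ω' - ({ω'' | T ω'' < n}).indicator (X n) ω') ω ≤
          SL.E n (fun ω' => (X n ω' - ({ω'' | T ω'' < n}).indicator (X n) ω') -
            X (min (T ω') n) ω') ω + SL.E n (fun ω' => X (min (T ω') n) ω') ω :=
        E_le_add SL n _ _ ω
      have c5 : SL.E n (fun ω' => (X n ω' - ({ω'' | T ω'' < n}).indicator (X n) ω') -
            X (min (T ω') n) ω') ω ≤
          SL.E n (({ω'' | T ω'' < n}).indicator (hsum X n)) ω := by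
        apply SL.mono
        intro ω'
        by_cases hb : ω' ∈ {ω'' | T ω'' < n}
        · rw [Set.indicator_of_mem hb, Set.indicator_of_mem hb]
          have h1 : |X (min (T ω') n) ω'| ≤ hsum X n ω' :=
            abs_le_hsum X (min_le_right _ _) ω'
          have h2' : -(X (min (T ω') n) ω') ≤ |X (min (T ω') n) ω'| := neg_le_abs _
          linarith
        · rw [Set.indicator_of_notMem hb, Set.indicator_of_notMem hb]
          have hge : n ≤ T ω' := by simpa using hb
          have : min (T ω') n = n := min_eq_right hge
          rw [this]
          simp
      have hdlt : dlt SL X T n ω = SL.E n (({ω'' | T ω'' < n}).indicator (hsum X n)) ω :=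
        Set.indicator_of_mem (show ω ∈ ({ω' | T ω' < n}ᶜ) from hBc) _
      rw [herr, hfg]
      rw [hdlt]
      linarith
    · -- "step" case : n + 1 ≤ T ω
      have hn1 : n + 1 ≤ T ω := by omega
      have hAc : MeasurableSet[F n] ({ω' | T ω' ≤ n}ᶜ) := (hT n).compl
      have ihs : ∀ ω', n+1 ≤ T ω' →
          X (n+1) ω' ≤ SL.E (n+1) (fun ω'' => X (T ω'') ω'') ω' + err SL X T K j ω' :=
        fun ω' h' => ih (n+1) (by omega) ω' h'
      set φ : Ω → ℝ := fun ω' => if n+1 ≤ T ω' then X (n+1) ω' - err SL X T K j ω'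
        else SL.E (n+1) (fun ω'' => X (T ω'') ω'') ω' with hφdef
      have hφle : ∀ ω', φ ω' ≤ SL.E (n+1) (fun ω'' => X (T ω'') ω'') ω' := by
        intro ω'
        by_cases h' : n+1 ≤ T ω'
        · simp only [hφdef, if_pos h']
          have h2 := err_nonneg SL X T K j ω'
          have := ihs ω' h'
          linarith
        · simp only [hφdef, if_neg h']
          exact le_rfl
      have t1 : SL.E n (fun ω' => X (T ω') ω') ω =
          SL.E n (SL.E (n+1) (fun ω' => X (T ω') ω')) ω :=
        (congrFun (SL.tower n (n+1) (Nat.le_succ n) _) ω).symm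
      have t2 : SL.E n φ ω ≤ SL.E n (SL.E (n+1) (fun ω' => X (T ω') ω')) ω :=
        SL.mono n _ _ hφle ω
      have t3 : SL.E n φ ω = SL.E n (fun ω' => X (n+1) ω' - err SL X T K j ω') ω := by
        apply locality SL hAc _ (show ω ∈ ({ω' | T ω' ≤ n}ᶜ) from hc)
        funext ω'
        by_cases hm : ω' ∈ ({ω'' | T ω'' ≤ n}ᶜ)
        · rw [Set.indicator_of_mem hm, Set.indicator_of_mem hm]
          have h' : n+1 ≤ T ω' := by
            have : ¬ T ω' ≤ n := hm
            omega
          simp only [hφdef, if_pos h']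
        · rw [Set.indicator_of_notMem hm, Set.indicator_of_notMem hm]
      have t4 : SL.E n (X (n+1)) ω ≤
          SL.E n (fun ω' => X (n+1) ω' - err SL X T K j ω') ω +
          SL.E n (err SL X T K j) ω :=
        E_le_add SL n (X (n+1)) _ ω
      have t5 : X n ω ≤ SL.E n (X (n+1)) ω := hsub n (n+1) (Nat.le_succ n) ω
      rw [herr]
      linarith

lemma main_sup (SL : SLFamily Ω F) (X : ℕ → Ω → ℝ) (hadapted : ∀ t, Measurable[F t] (X t))
    (T : Ω → ℕ) (hT : IsSLStoppingTime F T) (K : ℕ) (hbdd : ∀ ω, T ω ≤ K)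
    (hsup : ∀ s t, s ≤ t → ∀ ω, SL.E s (X t) ω ≤ X s ω) :
    ∀ j n, j + n = K + 1 → ∀ ω, n ≤ T ω →
      SL.E n (fun ω' => X (T ω') ω') ω ≤ X n ω + err SL X T K j ω := by
  intro j
  induction j with
  | zero =>
    intro n hn ω hω
    exfalso; have := hbdd ω; omega
  | succ j ih =>
    intro n hn ω hω
    have hKj : K - j = n := by omega
    have herr : err SL X T K (j+1) ω = SL.E n (err SL X T K j) ω + 2 * dlt SL X T n ω := by
      show SL.E (K - j) (err SL X T K j) ω + 2 * dlt SL X T (K - j) ω = _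
      rw [hKj]
    have herrnn : 0 ≤ SL.E n (err SL X T K j) ω :=
      E_nonneg SL n (err_nonneg SL X T K j) ω
    have hdltnn : 0 ≤ dlt SL X T n ω := dlt_nonneg SL X T n ω
    by_cases hc : T ω ≤ n
    · -- "gap" case : T ω = n
      have hBc : ¬ T ω < n := by omega
      have hfg : SL.E n (fun ω' => X (T ω') ω') ω =
          SL.E n (fun ω' => X (min (T ω') n) ω') ω := by
        apply locality SL (hT n) _ (show ω ∈ {ω' | T ω' ≤ n} from hc)
        funext ω'
        by_cases hm : ω' ∈ {ω'' | T ω'' ≤ n}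
        · rw [Set.indicator_of_mem hm, Set.indicator_of_mem hm]
          have : min (T ω') n = T ω' := min_eq_left hm
          rw [this]
        · rw [Set.indicator_of_notMem hm, Set.indicator_of_notMem hm]
      have s1 : SL.E n (fun ω' => X (min (T ω') n) ω') ω ≤
          SL.E n (fun ω' => X (min (T ω') n) ω' -
            ({ω'' | T ω'' < n}).indicator (fun ω''' => X (min (T ω''') n) ω''') ω') ω +
          SL.E n (({ω'' | T ω'' < n}).indicator (fun ω''' => X (min (T ω''') n) ω''')) ω :=
        E_le_add SL n _ _ ω
      have s2 : SL.E n (({ω'' | T ω'' < n}).indicator (fun ω''' => X (min (T ω''') n) ω''')) ω ≤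
          SL.E n (({ω'' | T ω'' < n}).indicator (hsum X n)) ω := by
        apply SL.mono
        intro ω'
        by_cases hb : ω' ∈ {ω'' | T ω'' < n}
        · rw [Set.indicator_of_mem hb, Set.indicator_of_mem hb]
          exact le_trans (le_abs_self _) (abs_le_hsum X (min_le_right _ _) ω')
        · rw [Set.indicator_of_notMem hb, Set.indicator_of_notMem hb]
      have s3 : SL.E n (fun ω' => X (min (T ω') n) ω' -
            ({ω'' | T ω'' < n}).indicator (fun ω''' => X (min (T ω''') n) ω''') ω') ω ≤
          SL.E n (fun ω' => (X (min (T ω') n) ω' -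
            ({ω'' | T ω'' < n}).indicator (fun ω''' => X (min (T ω''') n) ω''') ω') -
            X n ω') ω + SL.E n (X n) ω :=
        E_le_add SL n _ _ ω
      have s4 : SL.E n (fun ω' => (X (min (T ω') n) ω' -
            ({ω'' | T ω'' < n}).indicator (fun ω''' => X (min (T ω''') n) ω''') ω') -
            X n ω') ω ≤
          SL.E n (({ω'' | T ω'' < n}).indicator (hsum X n)) ω := by
        apply SL.mono
        intro ω'
        by_cases hb : ω' ∈ {ω'' | T ω'' < n}
        · rw [Set.indicator_of_mem hb, Set.indicator_of_mem hb]
          have h1 : |X n ω'| ≤ hsum X n ω' := abs_le_hsum X le_rfl ω'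
          have h2 : -(X n ω') ≤ |X n ω'| := neg_le_abs _
          linarith
        · rw [Set.indicator_of_notMem hb, Set.indicator_of_notMem hb]
          have hge : n ≤ T ω' := by simpa using hb
          have : min (T ω') n = n := min_eq_right hge
          rw [this]
          simp
      have s5 : SL.E n (X n) ω = X n ω := congrFun (SL.proj n (X n) (hadapted n)) ω
      have hdlt : dlt SL X T n ω = SL.E n (({ω'' | T ω'' < n}).indicator (hsum X n)) ω :=
        Set.indicator_of_mem (show ω ∈ ({ω' | T ω' < n}ᶜ) from hBc) _
      rw [herr, hfg, hdlt]
      linarith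
    · -- "step" case
      have hn1 : n + 1 ≤ T ω := by omega
      have hAc : MeasurableSet[F n] ({ω' | T ω' ≤ n}ᶜ) := (hT n).compl
      have ihs : ∀ ω', n+1 ≤ T ω' →
          SL.E (n+1) (fun ω'' => X (T ω'') ω'') ω' ≤ X (n+1) ω' + err SL X T K j ω' :=
        fun ω' h' => ih (n+1) (by omega) ω' h'
      set φ : Ω → ℝ := fun ω' => if n+1 ≤ T ω' then X (n+1) ω' + err SL X T K j ω'
        else SL.E (n+1) (fun ω'' => X (T ω'') ω'') ω' with hφdef
      have hφge : ∀ ω', SL.E (n+1) (fun ω'' => X (T ω'') ω'') ω' ≤ φ ω' := by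
        intro ω'
        by_cases h' : n+1 ≤ T ω'
        · simp only [hφdef, if_pos h']
          exact ihs ω' h'
        · simp only [hφdef, if_neg h']
          exact le_rfl
      have t1 : SL.E n (fun ω' => X (T ω') ω') ω =
          SL.E n (SL.E (n+1) (fun ω' => X (T ω') ω')) ω :=
        (congrFun (SL.tower n (n+1) (Nat.le_succ n) _) ω).symm
      have t2 : SL.E n (SL.E (n+1) (fun ω' => X (T ω') ω')) ω ≤ SL.E n φ ω :=
        SL.mono n _ _ hφge ω
      have t3 : SL.E n φ ω = SL.E n (fun ω' => X (n+1) ω' + err SL X T K j ω') ω := by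
        apply locality SL hAc _ (show ω ∈ ({ω' | T ω' ≤ n}ᶜ) from hc)
        funext ω'
        by_cases hm : ω' ∈ ({ω'' | T ω'' ≤ n}ᶜ)
        · rw [Set.indicator_of_mem hm, Set.indicator_of_mem hm]
          have h' : n+1 ≤ T ω' := by
            have : ¬ T ω' ≤ n := hm
            omega
          simp only [hφdef, if_pos h']
        · rw [Set.indicator_of_notMem hm, Set.indicator_of_notMem hm]
      have t4 : SL.E n (fun ω' => X (n+1) ω' + err SL X T K j ω') ω ≤
          SL.E n (X (n+1)) ω + SL.E n (err SL X T K j) ω := by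
        have : (fun ω' => X (n+1) ω' + err SL X T K j ω') =
            X (n+1) + err SL X T K j := rfl
        rw [this]
        exact SL.subadd n _ _ ω
      have t5 : SL.E n (X (n+1)) ω ≤ X n ω := hsup n (n+1) (Nat.le_succ n) ω
      rw [herr]
      linarith

end Main
section Assemble
variable {Ω : Type*} {F : ℕ → MeasurableSpace Ω}

lemma assemble_sub (SL : SLFamily Ω F) (X : ℕ → Ω → ℝ)
    (hadapted : ∀ t, Measurable[F t] (X t)) (S T : Ω → ℕ)
    (hT : IsSLStoppingTime F T) (hST : ∀ ω, S ω ≤ T ω) (K : ℕ) (hbdd : ∀ ω, T ω ≤ K)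
    (hsub : ∀ s t, s ≤ t → ∀ ω, X s ω ≤ SL.E s (X t) ω) :
    ∃ N : Set Ω, IsPolar SL N ∧ ∀ ω ∉ N,
      X (S ω) ω ≤ SL.E (S ω) (fun ω' => X (T ω') ω') ω := by
  set ψ : Ω → ℝ := fun ω => ∑ j ∈ Finset.range (K+2), err SL X T K j ω with hψdef
  have hψ0 : ∀ ω, 0 ≤ ψ ω := fun ω =>
    Finset.sum_nonneg fun j _ => err_nonneg SL X T K j ω
  have hψnull : ∀ ω, SL.E 0 ψ ω = 0 := by
    intro ω
    have hub : SL.E 0 ψ ω ≤ ∑ j ∈ Finset.range (K+2), SL.E 0 (err SL X T K j) ω :=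
      E_sum_le SL 0 (err SL X T K) (K+2) ω
    have hz : ∑ j ∈ Finset.range (K+2), SL.E 0 (err SL X T K j) ω = 0 :=
      Finset.sum_eq_zero fun j _ => err_null SL X T hT K j ω
    have hlb : 0 ≤ SL.E 0 ψ ω := E_nonneg SL 0 hψ0 ω
    rw [hz] at hub
    linarith
  refine ⟨{ω | ψ ω ≠ 0}, polar_of_null SL hψ0 hψnull, ?_⟩
  intro ω hω
  have hψω : ψ ω = 0 := by simpa using hω
  have hzero : ∀ j ∈ Finset.range (K+2), err SL X T K j ω = 0 :=
    (Finset.sum_eq_zero_iff_of_nonneg (fun j _ => err_nonneg SL X T K j ω)).mp hψω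
  have hjn : (K + 1 - S ω) + S ω = K + 1 := by
    have h1 := hST ω; have h2 := hbdd ω; omega
  have := main_sub SL X hadapted T hT K hbdd hsub (K + 1 - S ω) (S ω) hjn ω (hST ω)
  have hez : err SL X T K (K + 1 - S ω) ω = 0 :=
    hzero _ (Finset.mem_range.mpr (by omega))
  rw [hez] at this
  linarith

lemma assemble_sup (SL : SLFamily Ω F) (X : ℕ → Ω → ℝ)
    (hadapted : ∀ t, Measurable[F t] (X t)) (S T : Ω → ℕ)
    (hT : IsSLStoppingTime F T) (hST : ∀ ω, S ω ≤ T ω) (K : ℕ) (hbdd : ∀ ω, T ω ≤ K)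
    (hsup : ∀ s t, s ≤ t → ∀ ω, SL.E s (X t) ω ≤ X s ω) :
    ∃ N : Set Ω, IsPolar SL N ∧ ∀ ω ∉ N,
      SL.E (S ω) (fun ω' => X (T ω') ω') ω ≤ X (S ω) ω := by
  set ψ : Ω → ℝ := fun ω => ∑ j ∈ Finset.range (K+2), err SL X T K j ω with hψdef
  have hψ0 : ∀ ω, 0 ≤ ψ ω := fun ω =>
    Finset.sum_nonneg fun j _ => err_nonneg SL X T K j ω
  have hψnull : ∀ ω, SL.E 0 ψ ω = 0 := by
    intro ω
    have hub : SL.E 0 ψ ω ≤ ∑ j ∈ Finset.range (K+2), SL.E 0 (err SL X T K j) ω :=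
      E_sum_le SL 0 (err SL X T K) (K+2) ω
    have hz : ∑ j ∈ Finset.range (K+2), SL.E 0 (err SL X T K j) ω = 0 :=
      Finset.sum_eq_zero fun j _ => err_null SL X T hT K j ω
    have hlb : 0 ≤ SL.E 0 ψ ω := E_nonneg SL 0 hψ0 ω
    rw [hz] at hub
    linarith
  refine ⟨{ω | ψ ω ≠ 0}, polar_of_null SL hψ0 hψnull, ?_⟩
  intro ω hω
  have hψω : ψ ω = 0 := by simpa using hω
  have hzero : ∀ j ∈ Finset.range (K+2), err SL X T K j ω = 0 :=
    (Finset.sum_eq_zero_iff_of_nonneg (fun j _ => err_nonneg SL X T K j ω)).mp hψω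
  have hjn : (K + 1 - S ω) + S ω = K + 1 := by
    have h1 := hST ω; have h2 := hbdd ω; omega
  have := main_sup SL X hadapted T hT K hbdd hsup (K + 1 - S ω) (S ω) hjn ω (hST ω)
  have hez : err SL X T K (K + 1 - S ω) ω = 0 :=
    hzero _ (Finset.mem_range.mpr (by omega))
  rw [hez] at this
  linarith

end Assemble


/-- Optional stopping at bounded stopping times: for bounded
stopping times `S ≤ T`, an SL-submartingale satisfies `X_S ≤ E_S(X_T)`
quasi-surely; an SL-supermartingale satisfies `X_S ≥ E_S(X_T)` q.s.; and an
SL-martingale satisfies `X_S = E_S(X_T)` q.s.  Here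
`E_S(f)(ω) := E_{S(ω)}(f)(ω)`. -/
theorem optional_stopping_bounded
    {Ω : Type*} {F : ℕ → MeasurableSpace Ω} (SL : SLFamily Ω F)
    (X : ℕ → Ω → ℝ) (hadapted : ∀ t, Measurable[F t] (X t))
    (S T : Ω → ℕ)
    (hS : IsSLStoppingTime F S) (hT : IsSLStoppingTime F T)
    (hST : ∀ ω, S ω ≤ T ω) (K : ℕ) (hbdd : ∀ ω, T ω ≤ K) :
    ((∀ s t, s ≤ t → ∀ ω, X s ω ≤ SL.E s (X t) ω) →
      ∃ N : Set Ω, IsPolar SL N ∧ ∀ ω ∉ N,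
        X (S ω) ω ≤ SL.E (S ω) (fun ω' => X (T ω') ω') ω) ∧
    ((∀ s t, s ≤ t → ∀ ω, SL.E s (X t) ω ≤ X s ω) →
      ∃ N : Set Ω, IsPolar SL N ∧ ∀ ω ∉ N,
        SL.E (S ω) (fun ω' => X (T ω') ω') ω ≤ X (S ω) ω) ∧
    ((∀ s t, s ≤ t → SL.E s (X t) = X s) →
      ∃ N : Set Ω, IsPolar SL N ∧ ∀ ω ∉ N,
        X (S ω) ω = SL.E (S ω) (fun ω' => X (T ω') ω') ω) := by
  refine ⟨?_, ?_, ?_⟩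
  · intro hsub
    exact assemble_sub SL X hadapted S T hT hST K hbdd hsub
  · intro hsup
    exact assemble_sup SL X hadapted S T hT hST K hbdd hsup
  · intro hm
    have hsub : ∀ s t, s ≤ t → ∀ ω, X s ω ≤ SL.E s (X t) ω :=
      fun s t hst ω => (congrFun (hm s t hst) ω).ge
    have hsup : ∀ s t, s ≤ t → ∀ ω, SL.E s (X t) ω ≤ X s ω :=
      fun s t hst ω => (congrFun (hm s t hst) ω).le
    obtain ⟨N₁, hp1, h1⟩ := assemble_sub SL X hadapted S T hT hST K hbdd hsub
    obtain ⟨N₂, hp2, h2⟩ := assemble_sup SL X hadapted S T hT hST K hbdd hsup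
    refine ⟨N₁ ∪ N₂, polar_union SL hp1 hp2, ?_⟩
    intro ω hω
    exact le_antisymm (h1 ω (fun h => hω (Or.inl h))) (h2 ω (fun h => hω (Or.inr h)))
end

section
/- Let (E_t) be a filtration-consistent sublinear expectation and T a bounded stopping time. Then E(E_T(X)) = E(X) for all X in the domain, where E_T(·)(ω) := E_{T(ω)}(·)(ω). -/
open MeasureTheory

/-- for a bounded stopping time `T`, `E(E_T(X)) = E(X)`, where
`E_T(f)(ω) := E_{T(ω)}(f)(ω)` and `E := E_0`. -/
theorem consistency_at_bounded_stopping_times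
    {Ω : Type*} {F : ℕ → MeasurableSpace Ω} (SL : SLFamily Ω F)
    (T : Ω → ℕ) (hT : IsSLStoppingTime F T)
    (K : ℕ) (hbdd : ∀ ω, T ω ≤ K) (X : Ω → ℝ) :
    SL.E 0 (fun ω => SL.E (T ω) X ω) = SL.E 0 X := by
  -- locality: if f = g on an F_t-measurable set A, then E_t f = E_t g on A
  have loc : ∀ t (A : Set Ω), MeasurableSet[F t] A → ∀ f g : Ω → ℝ,
      (∀ ω ∈ A, f ω = g ω) → ∀ ω ∈ A, SL.E t f ω = SL.E t g ω := by
    intro t A hA f g hfg ω hω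
    have hind : A.indicator f = A.indicator g := by
      funext x
      by_cases hx : x ∈ A
      · simp [Set.indicator_of_mem hx, hfg x hx]
      · simp [Set.indicator_of_notMem hx]
    have h1 := SL.regular t A hA f
    have h2 := SL.regular t A hA g
    have h3 : A.indicator (SL.E t f) = A.indicator (SL.E t g) := by
      rw [← h1, ← h2, hind]
    calc SL.E t f ω = A.indicator (SL.E t f) ω := (Set.indicator_of_mem hω _).symm
      _ = A.indicator (SL.E t g) ω := by rw [h3]
      _ = SL.E t g ω := Set.indicator_of_mem hω _
  set g : ℕ → Ω → ℝ := fun n ω => SL.E (max (T ω) n) X ω with hg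
  have key : ∀ n, SL.E (K - n) (g (K - n)) = SL.E (K - n) X := by
    intro n
    induction n with
    | zero =>
      simp only [Nat.sub_zero]
      have hgK : g K = SL.E K X := by
        funext ω; simp [hg, Nat.max_eq_right (hbdd ω)]
      rw [hgK, SL.tower K K le_rfl]
    | succ n ih =>
      by_cases hK : K ≤ n
      · have h1 : K - (n + 1) = K - n := by omega
        rw [h1]; exact ih
      · have h1 : K - n = (K - (n + 1)) + 1 := by omega
        set t := K - (n + 1) with ht
        rw [h1] at ih
        funext ω
        by_cases hω : T ω ≤ t
        · have hloc := loc t {ω' | T ω' ≤ t} (hT t) (g t) (SL.E t X)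
            (fun ω' hω' => by simp [hg, Nat.max_eq_right hω']) ω hω
          rw [hloc, SL.tower t t le_rfl]
        · have hc : MeasurableSet[F t] {ω' | T ω' ≤ t}ᶜ := (hT t).compl
          have heq : SL.E t (g t) ω = SL.E t (g (t + 1)) ω := by
            refine loc t _ hc (g t) (g (t + 1)) ?_ ω hω
            intro ω' hω'
            have hle : t + 1 ≤ T ω' := by
              simp only [Set.mem_compl_iff, Set.mem_setOf_eq, not_le] at hω'
              omega
            simp [hg, Nat.max_eq_left hle, Nat.max_eq_left (by omega : t ≤ T ω')]
          rw [heq, ← SL.tower t (t + 1) (Nat.le_succ t) (g (t + 1)), ih,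
            SL.tower t (t + 1) (Nat.le_succ t) X]
  have h0 := key K
  simp only [Nat.sub_self] at h0
  have hg0 : g 0 = fun ω => SL.E (T ω) X ω := by
    funext ω; simp [hg]
  rw [← hg0, h0]
end

section
/- Let (E_t) be a filtration-consistent sublinear expectation. For any adapted process (X_n) with each X_n ∈ L¹, there exists a unique predictable process X̂ with X̂_0 = 0 such that X - X̂ is an SL-martingale. Moreover: X is an SL-submartingale iff X̂ is nondecreasing, and X is an SL-supermartingale iff X̂ is nonincreasing. (Doob decomposition under sublinear expectation.) -/
open MeasureTheory

/-- The compensator (predictable part) in the Doob decomposition. -/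
noncomputable def doobHat {Ω : Type*} {F : ℕ → MeasurableSpace Ω}
    (SL : SLFamily Ω F) (X : ℕ → Ω → ℝ) : ℕ → Ω → ℝ
  | 0 => 0
  | (t + 1) => fun ω => doobHat SL X t ω + SL.E t (X (t + 1)) ω - X t ω


/-- Doob decomposition: for any adapted process `X` there is a
unique predictable process `X̂` with `X̂ 0 = 0` such that `X - X̂` is an
SL-martingale; moreover `X` is an SL-submartingale iff `X̂` is nondecreasing,
and an SL-supermartingale iff `X̂` is nonincreasing. -/
theorem SL_doob_decomposition
    {Ω : Type*} {F : ℕ → MeasurableSpace Ω}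
    (hFmono : ∀ s t, s ≤ t → F s ≤ F t) (SL : SLFamily Ω F)
    (htrans : ∀ t (a : Ω → ℝ), Measurable[F t] a →
      ∀ f : Ω → ℝ, SL.E t (f + a) = SL.E t f + a)
    (X : ℕ → Ω → ℝ) (hadapted : ∀ t, Measurable[F t] (X t)) :
    (∃! Xhat : ℕ → Ω → ℝ,
      Xhat 0 = 0 ∧ (∀ t, Measurable[F t] (Xhat (t + 1))) ∧
        ∀ s t, s ≤ t →
          SL.E s (fun ω => X t ω - Xhat t ω) = fun ω => X s ω - Xhat s ω) ∧
    (∀ Xhat : ℕ → Ω → ℝ,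
      (Xhat 0 = 0 ∧ (∀ t, Measurable[F t] (Xhat (t + 1))) ∧
        ∀ s t, s ≤ t →
          SL.E s (fun ω => X t ω - Xhat t ω) = fun ω => X s ω - Xhat s ω) →
      (((∀ s t, s ≤ t → ∀ ω, X s ω ≤ SL.E s (X t) ω) ↔
          ∀ t ω, Xhat t ω ≤ Xhat (t + 1) ω) ∧
        ((∀ s t, s ≤ t → ∀ ω, SL.E s (X t) ω ≤ X s ω) ↔
          ∀ t ω, Xhat (t + 1) ω ≤ Xhat t ω))) := by
  classical
  set XH := doobHat SL X with hXH
  -- one-step translation lemma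
  have hstep : ∀ t (Y : Ω → ℝ), Measurable[F t] Y →
      SL.E t (fun ω => X (t + 1) ω - Y ω) =
        fun ω => SL.E t (X (t + 1)) ω - Y ω := by
    intro t Y hY
    have h1 : (fun ω => X (t + 1) ω - Y ω) = X (t + 1) + fun ω => -Y ω := by
      funext ω; simp [sub_eq_add_neg]
    have h2 := htrans t (fun ω => -Y ω) hY.neg (X (t + 1))
    rw [h1, h2]
    funext ω; simp [sub_eq_add_neg]
  -- measurability of the constructed compensator
  have hmeasHat : ∀ t, Measurable[F t] (XH t) := by
    intro t
    induction t with
    | zero => exact measurable_const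
    | succ t ih =>
      have h1 : Measurable[F (t + 1)] (XH t) := (ih.mono (hFmono t (t + 1) (Nat.le_succ t)) le_rfl)
      have h2 : Measurable[F (t + 1)] (SL.E t (X (t + 1))) :=
        (SL.measurable_E t (X (t + 1))).mono (hFmono t (t + 1) (Nat.le_succ t)) le_rfl
      have h3 : Measurable[F (t + 1)] (X t) :=
        (hadapted t).mono (hFmono t (t + 1) (Nat.le_succ t)) le_rfl
      exact (h1.add h2).sub h3
  have hmeasHat' : ∀ t, Measurable[F t] (XH (t + 1)) := by
    intro t
    have h1 := hmeasHat t
    have h2 := SL.measurable_E t (X (t + 1))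
    exact (h1.add h2).sub (hadapted t)
  -- one-step martingale identity for XH
  have honestep : ∀ t, SL.E t (fun ω => X (t + 1) ω - XH (t + 1) ω) =
      fun ω => X t ω - XH t ω := by
    intro t
    rw [hstep t (XH (t + 1)) (hmeasHat' t)]
    funext ω
    show SL.E t (X (t + 1)) ω - (XH t ω + SL.E t (X (t + 1)) ω - X t ω) = _
    ring
  -- martingale property of X - XH
  have hmart : ∀ s t, s ≤ t →
      SL.E s (fun ω => X t ω - XH t ω) = fun ω => X s ω - XH s ω := by
    intro s t hst
    induction t, hst using Nat.le_induction with
    | base =>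
      apply SL.proj
      exact (hadapted s).sub (hmeasHat s)
    | succ t hst ih =>
      have := SL.tower s t hst (fun ω => X (t + 1) ω - XH (t + 1) ω)
      rw [← this, honestep t, ih]
  -- uniqueness step: any valid compensator satisfies the recursion
  have huniq : ∀ Y : ℕ → Ω → ℝ,
      (Y 0 = 0 ∧ (∀ t, Measurable[F t] (Y (t + 1))) ∧
        ∀ s t, s ≤ t →
          SL.E s (fun ω => X t ω - Y t ω) = fun ω => X s ω - Y s ω) →
      ∀ t ω, Y (t + 1) ω - Y t ω = SL.E t (X (t + 1)) ω - X t ω := by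
    intro Y ⟨hY0, hYm, hYmart⟩ t ω
    have h := hYmart t (t + 1) (Nat.le_succ t)
    rw [hstep t (Y (t + 1)) (hYm t)] at h
    have := congrFun h ω
    linarith
  constructor
  · refine ⟨XH, ⟨rfl, hmeasHat', hmart⟩, ?_⟩
    intro Y hY
    obtain ⟨hY0, hYm, hYmart⟩ := hY
    have hrec := huniq Y ⟨hY0, hYm, hYmart⟩
    funext t ω
    induction t with
    | zero => rw [hY0]; rfl
    | succ t ih =>
      have h1 := hrec t ω
      have h2 : XH (t + 1) ω = XH t ω + SL.E t (X (t + 1)) ω - X t ω := rfl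
      rw [h2, ← ih]
      linarith
  · intro Y hY
    have hrec := huniq Y hY
    constructor
    · constructor
      · intro h t ω
        have := h t (t + 1) (Nat.le_succ t) ω
        have h1 := hrec t ω
        linarith
      · intro h s t hst ω
        induction t, hst using Nat.le_induction with
        | base => rw [SL.proj s (X s) (hadapted s)]
        | succ t hst ih =>
          have h1 : ∀ ω', X t ω' ≤ SL.E t (X (t + 1)) ω' := by
            intro ω'
            have := h t ω'
            have h2 := hrec t ω'
            linarith
          have h2 : SL.E s (X t) ω ≤ SL.E s (SL.E t (X (t + 1))) ω :=
            SL.mono s (X t) (SL.E t (X (t + 1))) h1 ω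
          rw [SL.tower s t hst (X (t + 1))] at h2
          linarith
    · constructor
      · intro h t ω
        have := h t (t + 1) (Nat.le_succ t) ω
        have h1 := hrec t ω
        linarith
      · intro h s t hst ω
        induction t, hst using Nat.le_induction with
        | base => rw [SL.proj s (X s) (hadapted s)]
        | succ t hst ih =>
          have h1 : ∀ ω', SL.E t (X (t + 1)) ω' ≤ X t ω' := by
            intro ω'
            have := h t ω'
            have h2 := hrec t ω'
            linarith
          have h2 : SL.E s (SL.E t (X (t + 1))) ω ≤ SL.E s (X t) ω :=
            SL.mono s (SL.E t (X (t + 1))) (X t) h1 ω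
          rw [SL.tower s t hst (X (t + 1))] at h2
          linarith
end

section
/- Let (E_t) be a filtration-consistent sublinear expectation and X a symmetric SL-martingale, meaning E_t(X_u) = X_t = -E_t(-X_u) for all t ≤ u. Then for any adapted (real-valued) process Z, the discrete integral Y_t = Y_0 + Σ_{0≤u<t} Z_u(X_{u+1} - X_u) is also a symmetric SL-martingale. -/
open MeasureTheory

/-- `X` is an SL-martingale: `X s = E s (X t)` for `s ≤ t`, each `X t` `F t`-measurable. -/
def IsSLMart {Ω : Type*} {F : ℕ → MeasurableSpace Ω} (SL : SLFamily Ω F)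
    (X : ℕ → Ω → ℝ) : Prop :=
  (∀ t, Measurable[F t] (X t)) ∧ ∀ s t, s ≤ t → SL.E s (X t) = X s

/-- A symmetric SL-martingale: both `X` and `-X` are SL-martingales. -/
def IsSymSLMart {Ω : Type*} {F : ℕ → MeasurableSpace Ω} (SL : SLFamily Ω F)
    (X : ℕ → Ω → ℝ) : Prop :=
  IsSLMart SL X ∧ IsSLMart SL (fun t => -(X t))

/-- If `f` has symmetric conditional expectation, `F t`-measurable summands
can be pulled out. -/
lemma SL_add_sym {Ω : Type*} {F : ℕ → MeasurableSpace Ω} (SL : SLFamily Ω F)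
    (t : ℕ) (g f : Ω → ℝ) (hg : Measurable[F t] g)
    (hsym : ∀ ω, SL.E t f ω = -(SL.E t (-f) ω)) :
    SL.E t (g + f) = g + SL.E t f := by
  funext ω
  have hgE : SL.E t g = g := SL.proj t g hg
  have h1 : SL.E t (g + f) ω ≤ g ω + SL.E t f ω := by
    have := SL.subadd t g f ω
    rw [hgE] at this
    exact this
  have h2 : g ω ≤ SL.E t (g + f) ω + SL.E t (-f) ω := by
    have heq : g = (g + f) + (-f) := by funext x; simp
    calc g ω = SL.E t g ω := by rw [hgE]
    _ = SL.E t ((g + f) + (-f)) ω := by rw [← heq]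
    _ ≤ SL.E t (g + f) ω + SL.E t (-f) ω := SL.subadd t _ _ ω
  have := hsym ω
  simp only [Pi.add_apply]
  linarith

/-- for a symmetric SL-martingale `X` and an adapted process `Z`,
the discrete stochastic integral
`Y t = Y 0 + Σ_{u<t} Z u (X (u+1) - X u)` is a symmetric SL-martingale. -/
theorem SL_integral_of_symmetric_martingale
    {Ω : Type*} {F : ℕ → MeasurableSpace Ω}
    (hFmono : ∀ s t, s ≤ t → F s ≤ F t) (SL : SLFamily Ω F)
    (X : ℕ → Ω → ℝ) (hX : IsSymSLMart SL X)
    (Z : ℕ → Ω → ℝ) (hZ : ∀ u, Measurable[F u] (Z u))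
    (Y0 : Ω → ℝ) (hY0 : Measurable[F 0] Y0) :
    IsSymSLMart SL (fun t ω =>
      Y0 ω + ∑ u ∈ Finset.range t, Z u ω * (X (u + 1) ω - X u ω)) := by
  set Y : ℕ → Ω → ℝ := fun t ω =>
    Y0 ω + ∑ u ∈ Finset.range t, Z u ω * (X (u + 1) ω - X u ω) with hY
  -- measurability of Y t w.r.t. F t
  have hXm : ∀ t, Measurable[F t] (X t) := hX.1.1
  have hYmeas : ∀ t, Measurable[F t] (Y t) := by
    intro t
    apply Measurable.add (hY0.mono (hFmono 0 t (Nat.zero_le t)) le_rfl)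
    apply Finset.measurable_sum
    intro u hu
    have hu' : u + 1 ≤ t := Finset.mem_range.mp hu
    exact ((hZ u).mono (hFmono u t (by omega)) le_rfl).mul
      (((hXm (u+1)).mono (hFmono (u+1) t hu') le_rfl).sub
        ((hXm u).mono (hFmono u t (by omega)) le_rfl))
  -- conditional expectations of increments are zero
  have hD : ∀ t, SL.E t (fun ω => X (t+1) ω - X t ω) = 0 := by
    intro t
    have hsym : ∀ ω, SL.E t (X (t+1)) ω = -(SL.E t (-(X (t+1))) ω) := by
      intro ω
      rw [hX.1.2 t (t+1) (by omega), hX.2.2 t (t+1) (by omega)]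
      simp
    have := SL_add_sym SL t (-(X t)) (X (t+1)) (hXm t).neg hsym
    rw [hX.1.2 t (t+1) (by omega)] at this
    have heq : (fun ω => X (t+1) ω - X t ω) = (-(X t)) + X (t+1) := by
      funext ω; simp only [Pi.add_apply, Pi.neg_apply]; ring
    rw [heq, this]; funext ω; simp
  have hD' : ∀ t, SL.E t (fun ω => -(X (t+1) ω - X t ω)) = 0 := by
    intro t
    have hsym : ∀ ω, SL.E t (-(X (t+1))) ω = -(SL.E t (-(-(X (t+1)))) ω) := by
      intro ω
      rw [neg_neg, hX.1.2 t (t+1) (by omega), hX.2.2 t (t+1) (by omega)]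
      simp
    have := SL_add_sym SL t (X t) (-(X (t+1))) (hXm t) hsym
    rw [hX.2.2 t (t+1) (by omega)] at this
    have heq : (fun ω => -(X (t+1) ω - X t ω)) = (X t) + (-(X (t+1))) := by
      funext ω; simp; ring
    rw [heq, this]; funext ω; simp
  -- conditional expectation of Z t * increment is zero, both signs
  have hZD : ∀ t, SL.E t (fun ω => Z t ω * (X (t+1) ω - X t ω)) = 0 := by
    intro t
    funext ω
    have := SL.poshom t (Z t) (hZ t) (fun ω => X (t+1) ω - X t ω) ω
    rw [hD t] at this
    have h2 : (-(fun ω => X (t+1) ω - X t ω) : Ω → ℝ)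
        = (fun ω => -(X (t+1) ω - X t ω)) := rfl
    rw [h2, hD' t] at this
    simpa using this
  have hZD' : ∀ t, SL.E t (fun ω => -(Z t ω * (X (t+1) ω - X t ω))) = 0 := by
    intro t
    funext ω
    have heq : (fun ω => -(Z t ω * (X (t+1) ω - X t ω)))
        = (fun ω => (-(Z t ω)) * (X (t+1) ω - X t ω)) := by funext ω; ring
    rw [heq]
    have := SL.poshom t (fun ω => -(Z t ω)) (hZ t).neg
      (fun ω => X (t+1) ω - X t ω) ω
    rw [hD t] at this
    have h2 : (-(fun ω => X (t+1) ω - X t ω) : Ω → ℝ)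
        = (fun ω => -(X (t+1) ω - X t ω)) := rfl
    rw [h2, hD' t] at this
    simpa using this
  -- one-step identities
  have hstep : ∀ t, SL.E t (Y (t+1)) = Y t := by
    intro t
    have heq : Y (t+1) = Y t + (fun ω => Z t ω * (X (t+1) ω - X t ω)) := by
      funext ω
      simp only [hY, Pi.add_apply, Finset.sum_range_succ]
      ring
    rw [heq, SL_add_sym SL t (Y t) _ (hYmeas t)
      (by intro ω
          have h2 : (-(fun ω => Z t ω * (X (t+1) ω - X t ω)) : Ω → ℝ)
              = (fun ω => -(Z t ω * (X (t+1) ω - X t ω))) := rfl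
          rw [hZD t, h2, hZD' t]; simp), hZD t]
    funext ω; simp
  have hstep' : ∀ t, SL.E t (-(Y (t+1))) = -(Y t) := by
    intro t
    have heq : -(Y (t+1)) = -(Y t) + (fun ω => -(Z t ω * (X (t+1) ω - X t ω))) := by
      funext ω
      simp only [hY, Pi.neg_apply, Pi.add_apply, Finset.sum_range_succ]
      ring
    rw [heq, SL_add_sym SL t (-(Y t)) _ (hYmeas t).neg
      (by intro ω
          have h2 : (-(fun ω => -(Z t ω * (X (t+1) ω - X t ω))) : Ω → ℝ)
              = (fun ω => Z t ω * (X (t+1) ω - X t ω)) := by funext ω; simp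
          rw [hZD' t, h2, hZD t]; simp), hZD' t]
    funext ω; simp
  -- multi-step via tower and induction
  have hmart : ∀ s t, s ≤ t → SL.E s (Y t) = Y s := by
    intro s t hst
    induction t, hst using Nat.le_induction with
    | base => exact SL.proj s (Y s) (hYmeas s)
    | succ t hst ih =>
      rw [← SL.tower s t hst (Y (t+1)), hstep t, ih]
  have hmart' : ∀ s t, s ≤ t → SL.E s (-(Y t)) = -(Y s) := by
    intro s t hst
    induction t, hst using Nat.le_induction with
    | base => exact SL.proj s (-(Y s)) (hYmeas s).neg
    | succ t hst ih =>
      rw [← SL.tower s t hst (-(Y (t+1))), hstep' t, ih]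
  exact ⟨⟨hYmeas, hmart⟩, ⟨fun t => (hYmeas t).neg, hmart'⟩⟩
end
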